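/- (Lower bound for the second derivative of the phase at high frequencies) There exist constants y₀ > 0 and C > 0, independent of μ, such that for all μ > 0 and all ξ ≥ y₀/√μ, one has |ω_μ''(ξ)| ≥ C μ^{−1/4} ξ^{−3/2}, where ω_μ'' is the second derivative of ω_μ. -/

import Mathlib

/-!
By scaling, `ω_μ(ξ) = μ^{-1/2} g(√μ ξ)` with `g(y) = √(y tanh y)`, so `ω_μ''(ξ) = √μ g''(√μ ξ)` and
it suffices to show `|g''(y)| ≥ y^{-3/2} / 16` for `y ≥ 2`. Writing `g = √h` with `h(y) = y tanh y`,
`g'' = (2 h h'' - h'²) / (4 h √h)`. For `y ≥ 2` we have `y tanh y ≥ 1`, hence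
`h'' = 2 sech² y (1 - y tanh y) ≤ 0`, while `h' ≥ tanh y ≥ 1/2` and `h ≤ y`: the numerator is
at most `-1/4` and the denominator at most `4 y √y`.
-/

open MeasureTheory Real

/-- The dispersion relation `ω_μ(ξ) = √(|ξ| tanh(√μ |ξ|) / √μ)`. -/
noncomputable def omegaWW (μ ξ : ℝ) : ℝ :=
  Real.sqrt (|ξ| * Real.tanh (Real.sqrt μ * |ξ|) / Real.sqrt μ)

open Filter Topology

namespace Real

theorem hasDerivAt_tanh (x : ℝ) : HasDerivAt tanh (1 - tanh x ^ 2) x := by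
  rw [show tanh = fun x => sinh x / cosh x from funext tanh_eq_sinh_div_cosh]
  refine ((hasDerivAt_sinh x).fun_div (hasDerivAt_cosh x) (cosh_pos x).ne').congr_deriv ?_
  have hc := (cosh_pos x).ne'
  field_simp

theorem one_half_le_tanh {x : ℝ} (hx : 2 ≤ x) : 1 / 2 ≤ tanh x := by
  rw [tanh_eq_sinh_div_cosh, le_div_iff₀ (cosh_pos x), sinh_eq, cosh_eq]
  nlinarith [add_one_le_exp x, exp_le_one_iff.2 (by linarith : -x ≤ 0)]

theorem rpow_neg_three_div_two {x : ℝ} (hx : 0 < x) : x ^ (-(3 : ℝ) / 2) = (x * √x)⁻¹ := by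
  rw [neg_div, rpow_neg hx.le, show (3 : ℝ) / 2 = 1 + 1 / 2 by norm_num, rpow_add hx, rpow_one,
    ← sqrt_eq_rpow]

end Real

theorem iteratedDeriv_comp_mul_left {𝕜 F : Type*} [NontriviallyNormedField 𝕜]
    [NormedAddCommGroup F] [NormedSpace 𝕜 F] (n : ℕ) (f : 𝕜 → F) (c : 𝕜) :
    iteratedDeriv n (fun x => f (c * x)) = fun x => c ^ n • iteratedDeriv n f (c * x) := by
  induction n with
  | zero => simp
  | succ n ih =>
    funext x
    rw [iteratedDeriv_succ, ih, iteratedDeriv_succ, deriv_fun_const_smul_field,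
      deriv_comp_mul_left (c := c) (f := iteratedDeriv n f), smul_smul, pow_succ]

theorem iteratedDeriv_two_sqrt {h h' : ℝ → ℝ} {h'' x : ℝ}
    (hh : ∀ᶠ y in 𝓝 x, HasDerivAt h (h' y) y) (hh' : HasDerivAt h' h'' x) (hx : 0 < h x) :
    iteratedDeriv 2 (fun y => √(h y)) x = (2 * h x * h'' - h' x ^ 2) / (4 * h x * √(h x)) := by
  have hpos : ∀ᶠ y in 𝓝 x, 0 < h y :=
    hh.self_of_nhds.continuousAt.eventually (lt_mem_nhds hx)
  have hderiv : deriv (fun y => √(h y)) =ᶠ[𝓝 x] fun y => h' y / (2 * √(h y)) := by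
    filter_upwards [hh, hpos] with y hy hy0
    exact (hy.sqrt hy0.ne').deriv
  have hs : 0 < √(h x) := sqrt_pos.2 hx
  have h2 := hh'.fun_div ((hh.self_of_nhds.sqrt hx.ne').const_mul 2) (by positivity)
  rw [iteratedDeriv_succ, iteratedDeriv_one, hderiv.deriv_eq, h2.deriv]
  field_simp
  rw [sq_sqrt hx.le]
  ring

theorem hasDerivAt_mul_tanh (y : ℝ) :
    HasDerivAt (fun t => t * tanh t) (tanh y + y * (1 - tanh y ^ 2)) y :=
  ((hasDerivAt_id' y).fun_mul (hasDerivAt_tanh y)).congr_deriv (by ring)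

theorem hasDerivAt_tanh_add_mul_one_sub_tanh_sq (y : ℝ) :
    HasDerivAt (fun t => tanh t + t * (1 - tanh t ^ 2))
      (2 * (1 - tanh y ^ 2) * (1 - y * tanh y)) y :=
  ((hasDerivAt_tanh y).fun_add ((hasDerivAt_id' y).fun_mul
    (((hasDerivAt_tanh y).fun_pow 2).const_sub 1))).congr_deriv (by ring)

theorem le_abs_iteratedDeriv_two_sqrt_mul_tanh {y : ℝ} (hy : 2 ≤ y) :
    y ^ (-(3 : ℝ) / 2) / 16 ≤ |iteratedDeriv 2 (fun t => √(t * tanh t)) y| := by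
  have hy0 : 0 < y := by linarith
  have hT : 1 / 2 ≤ tanh y := one_half_le_tanh hy
  have hT1 : tanh y < 1 := tanh_lt_one y
  have hyT : 1 ≤ y * tanh y := by nlinarith
  rw [iteratedDeriv_two_sqrt (Eventually.of_forall hasDerivAt_mul_tanh)
    (hasDerivAt_tanh_add_mul_one_sub_tanh_sq y) (by linarith), rpow_neg_three_div_two hy0]
  have hnum : 2 * (y * tanh y) * (2 * (1 - tanh y ^ 2) * (1 - y * tanh y))
      - (tanh y + y * (1 - tanh y ^ 2)) ^ 2 ≤ -(1 / 4) := by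
    have : 0 ≤ 1 - tanh y ^ 2 := by nlinarith
    nlinarith [mul_nonneg (mul_nonneg (by linarith : (0:ℝ) ≤ y * tanh y) this)
      (by linarith : (0:ℝ) ≤ y * tanh y - 1), mul_nonneg hy0.le this]
  have hden : 4 * (y * tanh y) * √(y * tanh y) ≤ 4 * y * √y := by
    have : y * tanh y ≤ y := by nlinarith
    gcongr
  have hden0 : 0 < 4 * (y * tanh y) * √(y * tanh y) := by positivity
  rw [abs_div, abs_of_pos hden0, abs_of_neg (by linarith)]
  calc (y * √y)⁻¹ / 16 = (1 / 4) / (4 * y * √y) := by ring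
    _ ≤ _ := div_le_div₀ (by linarith) (by linarith) hden0 hden

theorem omegaWW_eq_omegaWW_one {μ : ℝ} (hμ : 0 < μ) (ξ : ℝ) :
    omegaWW μ ξ = omegaWW 1 (√μ * ξ) / √μ := by
  have hs : 0 < √μ := sqrt_pos.2 hμ
  rw [omegaWW, omegaWW, sqrt_one, div_one, abs_mul, abs_of_pos hs, ← sqrt_sq hs.le,
    ← sqrt_div' _ (sq_nonneg _), sqrt_sq hs.le]
  congr 1
  field_simp

theorem omegaWW_one_eventuallyEq {y : ℝ} (hy : 0 < y) :
    omegaWW 1 =ᶠ[𝓝 y] fun t => √(t * tanh t) := by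
  filter_upwards [lt_mem_nhds hy] with t ht
  rw [omegaWW, sqrt_one, one_mul, div_one, abs_of_pos ht]

theorem iteratedDeriv_two_omegaWW {μ : ℝ} (hμ : 0 < μ) (ξ : ℝ) :
    iteratedDeriv 2 (omegaWW μ) ξ = √μ * iteratedDeriv 2 (omegaWW 1) (√μ * ξ) := by
  have hs : 0 < √μ := sqrt_pos.2 hμ
  rw [show omegaWW μ = fun ξ => omegaWW 1 (√μ * ξ) / √μ from funext (omegaWW_eq_omegaWW_one hμ),
    iteratedDeriv_div_const, iteratedDeriv_comp_mul_left]
  simp only [smul_eq_mul]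
  field_simp

/-- Lower bound for the second derivative of the phase at high frequencies. -/
theorem second_deriv_phase_lower_bound_high_freq :
    ∃ y₀ > 0, ∃ C > 0, ∀ μ > 0, ∀ ξ : ℝ, y₀ / Real.sqrt μ ≤ ξ →
      C * μ ^ (-(1:ℝ)/4) * ξ ^ (-(3:ℝ)/2) ≤ |iteratedDeriv 2 (omegaWW μ) ξ| := by
  refine ⟨2, two_pos, 1 / 16, by norm_num, fun μ hμ ξ hξ => ?_⟩
  have hs : 0 < √μ := sqrt_pos.2 hμ
  have hy : 2 ≤ √μ * ξ := by rwa [div_le_iff₀ hs, mul_comm] at hξ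
  have hξ0 : 0 < ξ := pos_of_mul_pos_right (by linarith) hs.le
  rw [iteratedDeriv_two_omegaWW hμ, abs_mul, abs_of_pos hs,
    ((omegaWW_one_eventuallyEq (by linarith)).iteratedDeriv 2).eq_of_nhds]
  calc 1 / 16 * μ ^ (-(1 : ℝ) / 4) * ξ ^ (-(3 : ℝ) / 2)
      = √μ * ((√μ * ξ) ^ (-(3 : ℝ) / 2) / 16) := by
        have hμ_exp : μ ^ (-(1 : ℝ) / 4) = μ ^ (1 / (2 : ℝ)) * μ ^ (1 / 2 * (-(3 : ℝ) / 2)) := by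
          rw [← rpow_add hμ]; norm_num
        rw [mul_rpow hs.le hξ0.le, sqrt_eq_rpow, ← rpow_mul hμ.le, hμ_exp]
        ring
    _ ≤ √μ * |iteratedDeriv 2 (fun t => √(t * tanh t)) (√μ * ξ)| :=
        mul_le_mul_of_nonneg_left (le_abs_iteratedDeriv_two_sqrt_mul_tanh hy) hs.le
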